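/- Let μ be a translation-invariant percolation on ℤ². Then μ-almost surely, the number of infinite clusters of G_η whose vertex sets have second coordinates bounded below is either 0 or infinite. -/

import Mathlib

/-!
If with positive probability there were at least one but only finitely many infinite clusters
bounded below, then with positive probability the set of heights of the vertices of such clusters
would be nonempty and bounded below, hence would have a least element `k`. The events
"the least such height is `k`", `k ∈ ℤ`, are pairwise disjoint and are carried to one another by
vertical translations, so by invariance they all have the same probability; countably many
disjoint events of equal probability all have probability zero.
-/

open MeasureTheory

/-- Vertices of the square lattice `ℤ²`. -/
abbrev Vertex : Type := ℤ × ℤ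

/-- Edges of `ℤ²`, encoded as a base vertex together with a direction:
`false` is the horizontal edge from `v` to `v + (1,0)`, `true` the vertical
edge from `v` to `v + (0,1)`. -/
abbrev Edge : Type := Vertex × Bool

/-- Percolation configurations `η : E(ℤ²) → {0,1}`. -/
abbrev Config : Type := Edge → Bool

/-- The displacement vector of an edge with direction `d`. -/
def edgeDir (d : Bool) : Vertex := if d then (0, 1) else (1, 0)

/-- `joins e u v` says that the edge `e` has endpoints `u` and `v`. -/
def joins (e : Edge) (u v : Vertex) : Prop :=
  (e.1 = u ∧ u + edgeDir e.2 = v) ∨ (e.1 = v ∧ v + edgeDir e.2 = u)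

/-- The open subgraph `G_η` of `ℤ²`: two vertices are adjacent iff some open
edge joins them. -/
def openGraph (η : Config) : SimpleGraph Vertex where
  Adj u v := u ≠ v ∧ ∃ e : Edge, η e = true ∧ joins e u v
  symm := by
    constructor
    rintro u v ⟨hne, e, he, hj⟩
    exact ⟨hne.symm, e, he, hj.symm⟩
  loopless := by
    constructor
    rintro u ⟨hne, -⟩
    exact hne rfl

/-- The half-plane restriction `HP_b(G_η)`: keep only open edges with both
endpoints having second coordinate `≥ b`. -/
def hpGraph (b : ℤ) (η : Config) : SimpleGraph Vertex where
  Adj u v := b ≤ u.2 ∧ b ≤ v.2 ∧ (openGraph η).Adj u v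
  symm := by
    constructor
    rintro u v ⟨hu, hv, h⟩
    exact ⟨hv, hu, h.symm⟩
  loopless := by
    constructor
    rintro u ⟨-, -, h⟩
    exact (openGraph η).loopless.irrefl u h

/-- `C` is a cluster (connected component) of `G_η`. -/
def IsCluster (η : Config) (C : Set Vertex) : Prop :=
  ∃ v : Vertex, C = {u | (openGraph η).Reachable v u}

/-- `C` is a cluster of the half-plane restriction `HP_b(G_η)`: the component
of some vertex lying in the half-plane `{y ≥ b}`. -/
def IsClusterHP (b : ℤ) (η : Config) (C : Set Vertex) : Prop :=
  ∃ v : Vertex, b ≤ v.2 ∧ C = {u | (hpGraph b η).Reachable v u}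

/-- The dual configuration `η*`: a dual edge is open iff the primal edge it
crosses is closed.  The dual edge with base `(a,c)` and direction `false`
(going to `(a+1,c)`) crosses the primal vertical edge `{(a+1,c),(a+1,c+1)}`;
the dual edge with base `(a,c)` and direction `true` (going to `(a,c+1)`)
crosses the primal horizontal edge `{(a,c+1),(a+1,c+1)}`. -/
def dualConfig (η : Config) : Config := fun e =>
  if e.2 then !η ((e.1.1, e.1.2 + 1), false) else !η ((e.1.1 + 1, e.1.2), true)

/-- Translation of configurations: `(T_t η)(e) = η (e - t)`. -/
def shift (t : Vertex) (η : Config) : Config := fun e => η (e.1 - t, e.2)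

open Function

theorem Set.infinite_iff_forall_finset_exists_notMem {α : Type*} {s : Set α} :
    s.Infinite ↔ ∀ t : Finset α, ∃ a ∈ s, a ∉ t :=
  ⟨Set.Infinite.exists_notMem_finset, fun h hfin =>
    let ⟨_, ha, hat⟩ := h hfin.toFinset
    hat (hfin.mem_toFinset.2 ha)⟩

theorem List.relationReflTransGen_iff_exists_isChain_cons {α : Type*} {r : α → α → Prop}
    {a b : α} :
    Relation.ReflTransGen r a b ↔
      ∃ l, IsChain r (a :: l) ∧ getLast (a :: l) (cons_ne_nil _ _) = b :=
  ⟨exists_isChain_cons_of_relationReflTransGen, fun ⟨l, hl, hlast⟩ =>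
    relationReflTransGen_of_exists_isChain_cons l hl hlast⟩

theorem MeasureTheory.measure_eq_zero_of_pairwise_disjoint_of_measure_eq {α ι : Type*}
    [MeasurableSpace α] {μ : Measure α} [IsFiniteMeasure μ] [Countable ι] [Infinite ι]
    {s : ι → Set α} (hdisj : Pairwise (Disjoint on s)) (hs : ∀ i, MeasurableSet (s i))
    (heq : ∀ i j, μ (s i) = μ (s j)) (i : ι) : μ (s i) = 0 := by
  by_contra hi
  apply measure_ne_top μ (⋃ j, s j)
  rw [measure_iUnion hdisj hs, funext (heq · i)]
  exact ENNReal.tsum_const_eq_top_of_ne_zero hi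

theorem isLeast_preimage_sub_iff {s : Set ℤ} {j k : ℤ} :
    IsLeast ((· - k) ⁻¹' s) j ↔ IsLeast s (j - k) := by
  refine and_congr_right fun _ =>
    ⟨fun h i hi => ?_, fun h i hi => (sub_le_sub_iff_right k).1 (h hi)⟩
  simpa using h (show i + k - k ∈ s by simpa using hi)

theorem ae_forall_not_isLeast_of_measurePreserving {Ω : Type*} [MeasurableSpace Ω]
    {μ : Measure Ω} [IsFiniteMeasure μ] (T : ℤ → Ω → Ω) (hT : ∀ k, MeasurePreserving (T k) μ μ)
    (A : Ω → Set ℤ) (hA : ∀ j, MeasurableSet {ω | j ∈ A ω})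
    (hcov : ∀ k j ω, j ∈ A (T k ω) ↔ j - k ∈ A ω) :
    ∀ᵐ ω ∂μ, ∀ j, ¬ IsLeast (A ω) j := by
  set E : ℤ → Set Ω := fun j => {ω | IsLeast (A ω) j}
  have hE : ∀ j, MeasurableSet (E j) := fun j => measurableSet_setOfPred.2 <|
    (measurableSet_setOfPred.1 (hA j)).and <|
      Measurable.forall fun i => (measurableSet_setOfPred.1 (hA i)).imp measurable_const
  have hpre : ∀ k j, T k ⁻¹' E j = E (j - k) := fun k j => by
    ext ω
    have hA' : A (T k ω) = (· - k) ⁻¹' A ω := Set.ext fun i => hcov k i ω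
    simp only [E, Set.mem_preimage, Set.mem_ofPred_eq, hA', isLeast_preimage_sub_iff]
  have hdisj : Pairwise (Disjoint on E) := fun i j hij =>
    Set.disjoint_left.2 fun _ hi hj => hij (hi.unique hj)
  have heq : ∀ i j, μ (E i) = μ (E j) := fun i j => by
    rw [← (hT (i - j)).measure_preimage (hE i).nullMeasurableSet, hpre, sub_sub_cancel]
  refine ae_all_iff.2 fun j => ae_iff.2 ?_
  simpa only [not_not] using measure_eq_zero_of_pairwise_disjoint_of_measure_eq hdisj hE heq j

theorem joins_add_add (e : Edge) (t u v : Vertex) :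
    joins (e.1 + t, e.2) (u + t) (v + t) ↔ joins e u v := by
  simp only [joins, add_left_inj, add_right_comm _ t]

theorem openGraph_shift_adj_add_add (t : Vertex) (η : Config) (u v : Vertex) :
    (openGraph (shift t η)).Adj (u + t) (v + t) ↔ (openGraph η).Adj u v := by
  simp only [openGraph, ne_eq, add_left_inj]
  refine and_congr_right' ⟨fun ⟨e, he, hj⟩ => ⟨(e.1 - t, e.2), he, ?_⟩,
    fun ⟨e, he, hj⟩ => ⟨(e.1 + t, e.2), by simpa [shift] using he, (joins_add_add e t u v).2 hj⟩⟩
  rw [← joins_add_add _ t]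
  simpa using hj

def openGraphShiftIso (t : Vertex) (η : Config) : openGraph η ≃g openGraph (shift t η) where
  toEquiv := Equiv.addRight t
  map_rel_iff' := openGraph_shift_adj_add_add t η _ _

theorem openGraph_shift_reachable_add_add (t : Vertex) (η : Config) (u v : Vertex) :
    (openGraph (shift t η)).Reachable (u + t) (v + t) ↔ (openGraph η).Reachable u v :=
  (openGraphShiftIso t η).reachable_iff

def cluster (η : Config) (v : Vertex) : Set Vertex := {u | (openGraph η).Reachable v u}

theorem cluster_shift (t : Vertex) (η : Config) (v : Vertex) :
    cluster (shift t η) (v + t) = Equiv.addRight t '' cluster η v := by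
  ext u
  refine ⟨fun h => ⟨u - t, ?_, sub_add_cancel u t⟩, ?_⟩
  · rwa [cluster, Set.mem_ofPred_eq, ← openGraph_shift_reachable_add_add t, sub_add_cancel]
  · rintro ⟨w, hw, rfl⟩
    exact (openGraph_shift_reachable_add_add t η v w).2 hw

def InBddBelowInfiniteCluster (η : Config) (v : Vertex) : Prop :=
  (cluster η v).Infinite ∧ BddBelow (Prod.snd '' cluster η v)

theorem inBddBelowInfiniteCluster_shift_add (t : Vertex) (η : Config) (v : Vertex) :
    InBddBelowInfiniteCluster (shift t η) (v + t) ↔ InBddBelowInfiniteCluster η v := by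
  have hsnd : Prod.snd '' (Equiv.addRight t '' cluster η v) =
      OrderIso.addRight t.2 '' (Prod.snd '' cluster η v) := by
    simp only [Set.image_image]
    rfl
  rw [InBddBelowInfiniteCluster, cluster_shift, Set.infinite_image_iff (Equiv.injective _).injOn,
    hsnd, OrderIso.bddBelow_image]
  rfl

def bddBelowInfiniteClusterHeights (η : Config) : Set ℤ :=
  Prod.snd '' {v | InBddBelowInfiniteCluster η v}

theorem mem_bddBelowInfiniteClusterHeights_shift (k j : ℤ) (η : Config) :
    j ∈ bddBelowInfiniteClusterHeights (shift (0, k) η) ↔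
      j - k ∈ bddBelowInfiniteClusterHeights η := by
  constructor
  · rintro ⟨v, hv, rfl⟩
    refine ⟨v - (0, k), ?_, rfl⟩
    exact (inBddBelowInfiniteCluster_shift_add (0, k) η _).1 (by rwa [sub_add_cancel])
  · rintro ⟨v, hv, hvj⟩
    refine ⟨v + (0, k), (inBddBelowInfiniteCluster_shift_add _ _ _).2 hv, ?_⟩
    simp only [Prod.snd_add, hvj, sub_add_cancel]

theorem measurable_openGraph_adj (u v : Vertex) :
    Measurable fun η : Config => (openGraph η).Adj u v := by
  show Measurable fun η : Config => u ≠ v ∧ ∃ e, η e = true ∧ joins e u v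
  fun_prop

theorem measurable_isChain_openGraph_adj (l : List Vertex) :
    Measurable fun η : Config => l.IsChain (openGraph η).Adj := by
  induction l with
  | nil => simp
  | cons u l ih =>
    cases l with
    | nil => simp
    | cons v l =>
      simp_rw [List.isChain_cons_cons]
      exact (measurable_openGraph_adj u v).and ih

theorem measurable_openGraph_reachable (u v : Vertex) :
    Measurable fun η : Config => (openGraph η).Reachable u v := by
  simp_rw [SimpleGraph.reachable_iff_reflTransGen,
    List.relationReflTransGen_iff_exists_isChain_cons]
  exact Measurable.exists fun l => (measurable_isChain_openGraph_adj _).and measurable_const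

theorem measurable_inBddBelowInfiniteCluster (v : Vertex) :
    Measurable fun η => InBddBelowInfiniteCluster η v := by
  simp_rw [InBddBelowInfiniteCluster, Set.infinite_iff_forall_finset_exists_notMem, bddBelow_def,
    Set.forall_mem_image, cluster, Set.mem_ofPred_eq]
  have := measurable_openGraph_reachable v
  fun_prop

theorem measurableSet_mem_bddBelowInfiniteClusterHeights (j : ℤ) :
    MeasurableSet {η | j ∈ bddBelowInfiniteClusterHeights η} :=
  measurableSet_setOfPred.2 <| Measurable.exists fun v =>
    (measurable_inBddBelowInfiniteCluster v).and measurable_const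

def bddBelowInfiniteClusters (η : Config) : Set (Set Vertex) :=
  {C | IsCluster η C ∧ C.Infinite ∧ BddBelow (Prod.snd '' C)}

theorem exists_isLeast_bddBelowInfiniteClusterHeights {η : Config}
    (hne : (bddBelowInfiniteClusters η).Nonempty) (hfin : (bddBelowInfiniteClusters η).Finite) :
    ∃ j, IsLeast (bddBelowInfiniteClusterHeights η) j := by
  obtain ⟨_, ⟨v, rfl⟩, hinf, hbdd⟩ := hne
  have hsub :
      bddBelowInfiniteClusterHeights η ⊆ ⋃ C ∈ bddBelowInfiniteClusters η, Prod.snd '' C := by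
    rintro _ ⟨u, hu, rfl⟩
    exact Set.mem_biUnion ⟨⟨u, rfl⟩, hu⟩ (Set.mem_image_of_mem _ (SimpleGraph.Reachable.refl u))
  have hbdd' : BddBelow (bddBelowInfiniteClusterHeights η) :=
    ((hfin.bddBelow_biUnion).2 fun C hC => hC.2.2).mono hsub
  have hne' : (bddBelowInfiniteClusterHeights η).Nonempty := ⟨v.2, v, ⟨hinf, hbdd⟩, rfl⟩
  exact ⟨_, Int.csInf_mem hne' hbdd', fun _ hj => csInf_le hbdd' hj⟩

/-- For a translation-invariant percolation on `ℤ²`, almost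
surely the collection of infinite clusters of `G_η` whose vertex sets have
second coordinates bounded below is empty or infinite. -/
theorem bounded_below_infinite_clusters_zero_or_infinite
    (μ : Measure Config) [IsProbabilityMeasure μ]
    (hinv : ∀ t : Vertex, MeasurePreserving (shift t) μ μ) :
    ∀ᵐ η ∂μ,
      {C : Set Vertex | IsCluster η C ∧ C.Infinite ∧ BddBelow (Prod.snd '' C)} = ∅ ∨
      {C : Set Vertex | IsCluster η C ∧ C.Infinite ∧ BddBelow (Prod.snd '' C)}.Infinite := by
  have hnoLeast := ae_forall_not_isLeast_of_measurePreserving (fun k => shift (0, k))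
    (fun k => hinv (0, k)) bddBelowInfiniteClusterHeights
    measurableSet_mem_bddBelowInfiniteClusterHeights mem_bddBelowInfiniteClusterHeights_shift
  filter_upwards [hnoLeast] with η hη
  by_contra! ⟨hne, hfin⟩
  obtain ⟨j, hj⟩ := exists_isLeast_bddBelowInfiniteClusterHeights hne hfin
  exact hη j hj
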